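/- arXiv:2601.08704 — 8 statements merged into one kernel-verified Lean document; each statement's English description precedes it below -/
import Mathlib

section
/- Define q : (ℂ*)×ℂ×ℂ×ℂ → ℂ³ by q(x1,x2,y,z) = (x2, y/x1, z/x1²), F1 : ℂ³ → ℂ³ by F1(x,y,z) = (x−y+z, z, y), and F2 : ℂ³ → ℂ³ by F2(x,y,z) = (y², x·y, −x·z). Then for all complex x1,x2,y,z: (a) if x1 ≠ 0, then q(x1⁻¹, x1²·x2 − x1·y + z, z/x1, y/x1) = x1² • F1(q(x1,x2,y,z)); (b) if x1 ≠ 0, x2 ≠ 0 and y ≠ 0, then x1² • F2(q(x1,x2,y,z)) = (−x2·y²) • q(y, −x2⁻¹, −x1, z). (Here λ•v denotes scalar multiplication in ℂ³.) Hence the birational maps of ℙ² induced by the Weyl group generators r1, r2 acting on the quotient of the big cell by the maximal torus are given in homogeneous coordinates by F1 and F2. -/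
/-- The quotient map from the big cell to homogeneous coordinates of ℙ². -/
noncomputable def qMap (x1 x2 y z : ℂ) : ℂ × ℂ × ℂ := (x2, y / x1, z / x1 ^ 2)

/-- Homogeneous representative of the Cremona transformation induced by r1. -/
def F1 (p : ℂ × ℂ × ℂ) : ℂ × ℂ × ℂ := (p.1 - p.2.1 + p.2.2, p.2.2, p.2.1)

/-- Homogeneous representative of the Cremona transformation induced by r2. -/
def F2 (p : ℂ × ℂ × ℂ) : ℂ × ℂ × ℂ := (p.2.1 ^ 2, p.1 * p.2.1, -(p.1 * p.2.2))

theorem stmt5 : ∀ x1 x2 y z : ℂ,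
    (x1 ≠ 0 →
      qMap x1⁻¹ (x1 ^ 2 * x2 - x1 * y + z) (z / x1) (y / x1) =
        x1 ^ 2 • F1 (qMap x1 x2 y z)) ∧
    (x1 ≠ 0 → x2 ≠ 0 → y ≠ 0 →
      x1 ^ 2 • F2 (qMap x1 x2 y z) = (-(x2 * y ^ 2)) • qMap y (-x2⁻¹) (-x1) z) := by
  intro x1 x2 y z
  constructor
  · intro h1
    simp only [qMap, F1, Prod.smul_mk, smul_eq_mul, Prod.mk.injEq]
    refine ⟨?_, ?_, ?_⟩ <;> field_simp <;> ring
  · intro h1 h2 h3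
    simp only [qMap, F2, Prod.smul_mk, smul_eq_mul, Prod.mk.injEq]
    refine ⟨?_, ?_, ?_⟩ <;> field_simp <;> ring
end

section
/- Let F1 : ℂ³ → ℂ³ be F1(x,y,z) = (x−y+z, z, y), F2 : ℂ³ → ℂ³ be F2(x,y,z) = (y², x·y, −x·z), and set G = F1 ∘ F2. Then: (a) for every v ∈ ℂ³, the vector G(G(G(G(v)))) is a scalar multiple of v (i.e. lies in the line ℂ·v); (b) there exists v ∈ ℂ³ such that G(G(v)) is not a scalar multiple of v. In particular the birational map of ℙ² induced by G has order exactly 4, so F1 and F2 generate a dihedral group of order 8 inside the Cremona group of ℙ², the Cremona representation of the Weyl group of type C2. -/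
/-- The composite `G = F1 ∘ F2`, inducing the rotation of order 4 in the
Cremona representation of the Weyl group of type C2. -/
def G : ℂ × ℂ × ℂ → ℂ × ℂ × ℂ := F1 ∘ F2

theorem stmt7 :
    (∀ v : ℂ × ℂ × ℂ, ∃ c : ℂ, G (G (G (G v))) = c • v) ∧
    (∃ v : ℂ × ℂ × ℂ, ¬ ∃ c : ℂ, G (G v) = c • v) := by
  constructor
  · rintro ⟨x, y, z⟩
    refine ⟨x^4*y^8*z^3 - x^4*y^9*z^2 - 2*x^5*y^6*z^4 + 3*x^5*y^8*z^2 + x^6*y^4*z^5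
        + x^6*y^5*z^4 - 3*x^6*y^6*z^3 - 3*x^6*y^7*z^2 + x^7*y^4*z^4 + 2*x^7*y^5*z^3
        + x^7*y^6*z^2, ?_⟩
    simp only [G, F1, F2, Function.comp, Prod.smul_def, smul_eq_mul, Prod.mk.injEq]
    refine ⟨by ring, by ring, by ring⟩
  · refine ⟨(1, 2, 3), ?_⟩
    rintro ⟨c, hc⟩
    simp only [G, F1, F2, Function.comp, Prod.smul_def, smul_eq_mul, Prod.mk.injEq] at hc
    obtain ⟨h1, h2, h3⟩ := hc
    norm_num at h1 h2 h3
    rw [← h1] at h2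
    norm_num at h2
end

section
/- Let p1(x,y,z) = x − y + z and p2(x,y,z) = x·y − y² + x·z, and let F1(x,y,z) = (x−y+z, z, y) and F2(x,y,z) = (y², x·y, −x·z). Then for all (x,y,z) ∈ ℂ³: p2(F1(x,y,z)) = p2(x,y,z) and p1(F2(x,y,z)) = −p2(x,y,z). (Equivalently: the Cremona transformation induced by F1 preserves the conic {p2 = 0}, and the one induced by F2 maps the conic {p2 = 0} onto the line {p1 = 0}.) -/
/-- The polynomial defining the boundary line A4. -/
def p1 (p : ℂ × ℂ × ℂ) : ℂ := p.1 - p.2.1 + p.2.2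

/-- The polynomial defining the boundary conic A3. -/
def p2 (p : ℂ × ℂ × ℂ) : ℂ := p.1 * p.2.1 - p.2.1 ^ 2 + p.1 * p.2.2

theorem stmt8 : ∀ v : ℂ × ℂ × ℂ, p2 (F1 v) = p2 v ∧ p1 (F2 v) = -(p2 v) := by
  intro v; constructor <;> simp [p1, p2, F1, F2] <;> ring
end

section
/- Let M be the symmetric 8×8 rational matrix M = [[-1,0,1,0,0,1,1,0],[0,-1,0,1,0,0,1,1],[1,0,-1,0,1,0,0,1],[0,1,0,-1,1,1,0,0],[0,0,1,1,-1/2,0,1/2,0],[1,0,0,1,0,-1/2,0,1/2],[1,1,0,0,1/2,0,-1/2,0],[0,1,1,0,0,1/2,0,-1/2]]. Then the kernel of M (as a linear map ℚ⁸ → ℚ⁸) is exactly the span of the four vectors v1 = (1,-1,1,-1,0,0,0,0), v2 = (0,0,0,0,1,-1,1,-1), v3 = (1,0,0,-1,-1,0,1,0), v4 = (1,-1,0,0,0,1,0,-1); in particular M has rank 4. -/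
open Matrix

def Mmat : Matrix (Fin 8) (Fin 8) ℚ :=
  !![-1, 0, 1, 0, 0, 1, 1, 0;
     0, -1, 0, 1, 0, 0, 1, 1;
     1, 0, -1, 0, 1, 0, 0, 1;
     0, 1, 0, -1, 1, 1, 0, 0;
     0, 0, 1, 1, -1/2, 0, 1/2, 0;
     1, 0, 0, 1, 0, -1/2, 0, 1/2;
     1, 1, 0, 0, 1/2, 0, -1/2, 0;
     0, 1, 1, 0, 0, 1/2, 0, -1/2]

section aux
variable {α : Type*} {m : ℕ}
lemma cons_val_three' (x : α) (u : Fin (m+3) → α) :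
    vecCons x u 3 = vecHead (vecTail (vecTail u)) := rfl
lemma cons_val_four' (x : α) (u : Fin (m+4) → α) :
    vecCons x u 4 = vecHead (vecTail (vecTail (vecTail u))) := rfl
lemma cons_val_five' (x : α) (u : Fin (m+5) → α) :
    vecCons x u 5 = vecHead (vecTail (vecTail (vecTail (vecTail u)))) := rfl
lemma cons_val_six' (x : α) (u : Fin (m+6) → α) :
    vecCons x u 6 = vecHead (vecTail (vecTail (vecTail (vecTail (vecTail u))))) := rfl
lemma cons_val_seven' (x : α) (u : Fin (m+7) → α) :
    vecCons x u 7 = vecHead (vecTail (vecTail (vecTail (vecTail (vecTail (vecTail u)))))) := rfl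
end aux

def v1 : Fin 8 → ℚ := ![1, -1, 1, -1, 0, 0, 0, 0]
def v2 : Fin 8 → ℚ := ![0, 0, 0, 0, 1, -1, 1, -1]
def v3 : Fin 8 → ℚ := ![1, 0, 0, -1, -1, 0, 1, 0]
def v4 : Fin 8 → ℚ := ![1, -1, 0, 0, 0, 1, 0, -1]

lemma ker_char (x : Fin 8 → ℚ) : Mmat.mulVec x = 0 ↔
      x ∈ Submodule.span ℚ ({v1, v2, v3, v4} : Set (Fin 8 → ℚ)) := by
  constructor
  · intro h
    have h0 := congrFun h 0
    have h1 := congrFun h 1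
    have h2 := congrFun h 2
    have h3 := congrFun h 3
    have h4 := congrFun h 4
    have h5 := congrFun h 5
    have h6 := congrFun h 6
    have h7 := congrFun h 7
    simp [Mmat, mulVec, dotProduct, Fin.sum_univ_eight,
      cons_val_five', cons_val_six', cons_val_seven'] at h0 h1 h2 h3 h4 h5 h6 h7
    have hx : x = (-x 3 - x 6 - (x 5 + x 7)/2) • v1 + ((-(x 5 + x 7))/2) • v2
        + (x 6 + (x 5 + x 7)/2) • v3 + ((x 5 - x 7)/2) • v4 := by
      funext i
      fin_cases i <;>
        simp [v1, v2, v3, v4, cons_val_five', cons_val_six', cons_val_seven'] <;> linarith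
    rw [hx]
    have m1 : v1 ∈ ({v1, v2, v3, v4} : Set (Fin 8 → ℚ)) := by simp
    have m2 : v2 ∈ ({v1, v2, v3, v4} : Set (Fin 8 → ℚ)) := by simp
    have m3 : v3 ∈ ({v1, v2, v3, v4} : Set (Fin 8 → ℚ)) := by simp
    have m4 : v4 ∈ ({v1, v2, v3, v4} : Set (Fin 8 → ℚ)) := by simp
    exact Submodule.add_mem _ (Submodule.add_mem _ (Submodule.add_mem _
      (Submodule.smul_mem _ _ (Submodule.subset_span m1))
      (Submodule.smul_mem _ _ (Submodule.subset_span m2)))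
      (Submodule.smul_mem _ _ (Submodule.subset_span m3)))
      (Submodule.smul_mem _ _ (Submodule.subset_span m4))
  · intro h
    have : x ∈ LinearMap.ker Mmat.mulVecLin := by
      refine Submodule.span_le.mpr ?_ h
      rintro y (rfl | rfl | rfl | rfl) <;>
        · simp only [SetLike.mem_coe, LinearMap.mem_ker, mulVecLin_apply]
          funext i
          fin_cases i <;>
            norm_num [Mmat, v1, v2, v3, v4, mulVec, dotProduct, Fin.sum_univ_eight,
              cons_val_two, cons_val_three', cons_val_four',
              cons_val_five', cons_val_six', cons_val_seven']
    simpa using this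

lemma indep : LinearIndependent ℚ ![v1, v2, v3, v4] := by
  rw [Fintype.linearIndependent_iff]
  intro g hg
  have h3 := congrFun hg 3
  have h5 := congrFun hg 5
  have h6 := congrFun hg 6
  have h7 := congrFun hg 7
  simp [Fin.sum_univ_four, v1, v2, v3, v4,
    cons_val_five', cons_val_six', cons_val_seven'] at h3 h5 h6 h7
  intro i
  fin_cases i <;> simp <;> linarith

theorem stmt10 :
    (∀ x : Fin 8 → ℚ, Mmat.mulVec x = 0 ↔
      x ∈ Submodule.span ℚ
        ({![1, -1, 1, -1, 0, 0, 0, 0], ![0, 0, 0, 0, 1, -1, 1, -1],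
          ![1, 0, 0, -1, -1, 0, 1, 0], ![1, -1, 0, 0, 0, 1, 0, -1]} :
          Set (Fin 8 → ℚ))) ∧
    Mmat.rank = 4 := by
  have hker : LinearMap.ker Mmat.mulVecLin =
      Submodule.span ℚ ({v1, v2, v3, v4} : Set (Fin 8 → ℚ)) := by
    ext x
    rw [LinearMap.mem_ker, mulVecLin_apply, ker_char]
  have hsetr : ({v1, v2, v3, v4} : Set (Fin 8 → ℚ)) = Set.range ![v1, v2, v3, v4] := by
    ext y
    constructor
    · rintro (rfl | rfl | rfl | rfl)
      exacts [⟨0, rfl⟩, ⟨1, rfl⟩, ⟨2, rfl⟩, ⟨3, rfl⟩]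
    · rintro ⟨i, rfl⟩
      fin_cases i <;> simp
  have hfk : Module.finrank ℚ (LinearMap.ker Mmat.mulVecLin) = 4 := by
    rw [hker, hsetr, finrank_span_eq_card indep]
    simp
  refine ⟨ker_char, ?_⟩
  have h8 := LinearMap.finrank_range_add_finrank_ker Mmat.mulVecLin
  rw [hfk] at h8
  simp [Module.finrank_fintype_fun_eq_card] at h8
  rw [Matrix.rank]
  omega
end

section
/- Let M be the 8×8 rational matrix [[-1,0,1,0,0,1,1,0],[0,-1,0,1,0,0,1,1],[1,0,-1,0,1,0,0,1],[0,1,0,-1,1,1,0,0],[0,0,1,1,-1/2,0,1/2,0],[1,0,0,1,0,-1/2,0,1/2],[1,1,0,0,1/2,0,-1/2,0],[0,1,1,0,0,1/2,0,-1/2]] and let k = (1/2)·(1,1,1,1,1,1,1,1) ∈ ℚ⁸. Then M·k = (1,1,1,1,1,1,1,1) and kᵀ·M·k = 4. (That is, the anticanonical class −K_X = (1/2)(A1+A2+A3+A4+B12+B23+B34+B41) has intersection number 1 with each boundary curve, and self-intersection (−K_X)² = 4.) -/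
open Matrix

/-- The anticanonical class -K_X = (1/2)(A1+A2+A3+A4+B12+B23+B34+B41)
in the boundary-divisor basis. -/
def kVec : Fin 8 → ℚ := (1/2 : ℚ) • ![1, 1, 1, 1, 1, 1, 1, 1]

theorem stmt13 :
    Mmat.mulVec kVec = ![1, 1, 1, 1, 1, 1, 1, 1] ∧
    kVec ⬝ᵥ Mmat.mulVec kVec = 4 := by
  constructor
  · funext i; fin_cases i <;> norm_num [Mmat, kVec, mulVec, dotProduct, Fin.sum_univ_succ, Matrix.cons_val_succ]
  · simp [Mmat, kVec, mulVec, dotProduct, Fin.sum_univ_succ]; norm_num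
end

section
/- Let p1 = x − y + z and p2 = x·y − y² + x·z in ℂ[x,y,z], and let Φ = (Φ0, Φ1, Φ2, Φ3, Φ4) = (x·y·p1, x·z², x·p2, y·p2, z·p2). Then the polynomial identities (Φ0 − Φ2)·Φ4 + Φ1·(Φ2 − Φ3) = 0 and (Φ0 − Φ2)·Φ3 + Φ2·(Φ4 − Φ1) = 0 hold in ℂ[x,y,z]. (That is, the image of the anticanonical map of the Chow quotient X is contained in the intersection of the two quadrics Q1: (X0−X2)X4 + X1(X2−X3) = 0 and Q2: (X0−X2)X3 + X2(X4−X1) = 0 in ℙ⁴.) -/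
open MvPolynomial

/-- p1 = x - y + z in ℂ[x,y,z]. -/
noncomputable def P1 : MvPolynomial (Fin 3) ℂ := X 0 - X 1 + X 2

/-- p2 = x·y - y² + x·z in ℂ[x,y,z]. -/
noncomputable def P2 : MvPolynomial (Fin 3) ℂ := X 0 * X 1 - X 1 ^ 2 + X 0 * X 2

/-- The 5-tuple of cubics defining the anticanonical map of the Chow quotient X. -/
noncomputable def Phi : Fin 5 → MvPolynomial (Fin 3) ℂ :=
  ![X 0 * X 1 * P1, X 0 * X 2 ^ 2, X 0 * P2, X 1 * P2, X 2 * P2]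

theorem stmt17 :
    (Phi 0 - Phi 2) * Phi 4 + Phi 1 * (Phi 2 - Phi 3) = 0 ∧
    (Phi 0 - Phi 2) * Phi 3 + Phi 2 * (Phi 4 - Phi 1) = 0 := by
  have h0 : Phi 0 = X 0 * X 1 * P1 := rfl
  have h1 : Phi 1 = X 0 * X 2 ^ 2 := rfl
  have h2 : Phi 2 = X 0 * P2 := rfl
  have h3 : Phi 3 = X 1 * P2 := rfl
  have h4 : Phi 4 = X 2 * P2 := rfl
  constructor <;> · rw [h0, h1, h2, h3, h4]; unfold P1 P2; ring
end

section
/- Let F1(x,y,z) = (x−y+z, z, y), F2(x,y,z) = (y², x·y, −x·z), Φ(x,y,z) = (x·y·(x−y+z), x·z², x·p2, y·p2, z·p2) with p2 = x·y − y² + x·z, and let R1 and R2 be the 5×5 complex matrices R1 = [[-1,1,1,0,0],[0,1,0,1,-1],[0,0,1,-1,1],[0,0,0,0,1],[0,0,0,1,0]] and R2 = [[0,0,0,-1,0],[0,1,0,0,0],[0,-1,0,-1,1],[-1,0,0,0,0],[-1,1,1,0,0]]. Then for all (x,y,z) ∈ ℂ³: (a) R1 · Φ(x,y,z) = Φ(F1(x,y,z))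 (as vectors in ℂ⁵); (b) Φ(F2(x,y,z)) = (x·y²) • (R2 · Φ(x,y,z)). (That is, the Weyl group action on ℙ² lifts via the anticanonical map to the projectivities of ℙ⁴ given by R1 and R2.) -/
open Matrix

/-- The 5-tuple of cubics defining the anticanonical map of the Chow quotient X. -/
def PhiC (p : ℂ × ℂ × ℂ) : Fin 5 → ℂ :=
  ![p.1 * p.2.1 * (p.1 - p.2.1 + p.2.2),
    p.1 * p.2.2 ^ 2,
    p.1 * (p.1 * p.2.1 - p.2.1 ^ 2 + p.1 * p.2.2),
    p.2.1 * (p.1 * p.2.1 - p.2.1 ^ 2 + p.1 * p.2.2),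
    p.2.2 * (p.1 * p.2.1 - p.2.1 ^ 2 + p.1 * p.2.2)]

/-- The matrix of the projectivity of ℙ⁴ induced by r1. -/
noncomputable def R1 : Matrix (Fin 5) (Fin 5) ℂ :=
  !![-1, 1, 1, 0, 0;
     0, 1, 0, 1, -1;
     0, 0, 1, -1, 1;
     0, 0, 0, 0, 1;
     0, 0, 0, 1, 0]

/-- The matrix of the projectivity of ℙ⁴ induced by r2. -/
noncomputable def R2 : Matrix (Fin 5) (Fin 5) ℂ :=
  !![0, 0, 0, -1, 0;
     0, 1, 0, 0, 0;
     0, -1, 0, -1, 1;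
     -1, 0, 0, 0, 0;
     -1, 1, 1, 0, 0]

theorem stmt18 : ∀ p : ℂ × ℂ × ℂ,
    R1.mulVec (PhiC p) = PhiC (F1 p) ∧
    PhiC (F2 p) = (p.1 * p.2.1 ^ 2) • R2.mulVec (PhiC p) := by
  intro ⟨x,y,z⟩
  constructor <;> funext i <;> fin_cases i <;>
    simp [R1, R2, PhiC, F1, F2, Matrix.mulVec, dotProduct, Fin.sum_univ_five] <;>
    (first | ring1 | · left; ring1)
end

section
/- Let R1 = [[-1,1,1,0,0],[0,1,0,1,-1],[0,0,1,-1,1],[0,0,0,0,1],[0,0,0,1,0]] and R2 = [[0,0,0,-1,0],[0,1,0,0,0],[0,-1,0,-1,1],[-1,0,0,0,0],[-1,1,1,0,0]] in GL(5,ℂ). Then R1² = I, R2² = I, (R1·R2)⁴ = I, and (R1·R2)² ≠ I; consequently the subgroup of GL(5,ℂ) generated by R1 and R2 has exactly 8 elements and is isomorphic to the dihedral group of order 8. -/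
open Matrix

noncomputable def Amat : Matrix (Fin 5) (Fin 5) ℂ :=
  !![0, 0, 0, 0, 1;
     0, 0, -1, 0, 0;
     0, 0, 1, -1, 1;
     -1, 1, 1, 0, 0;
     -1, 0, 0, 0, 0]

noncomputable def A2mat : Matrix (Fin 5) (Fin 5) ℂ :=
  !![-1, 0, 0, 0, 0;
     0, 0, -1, 1, -1;
     0, -1, 0, -1, 1;
     0, 0, 0, -1, 0;
     0, 0, 0, 0, -1]

noncomputable def A3mat : Matrix (Fin 5) (Fin 5) ℂ :=
  !![0, 0, 0, 0, -1;
     0, 1, 0, 1, -1;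
     0, -1, 0, 0, 0;
     1, -1, -1, 0, 0;
     1, 0, 0, 0, 0]

lemma hR1sq : R1 * R1 = 1 := by
  ext i j
  fin_cases i <;> fin_cases j <;>
    norm_num [R1, Matrix.mul_apply, Fin.sum_univ_five, Matrix.one_apply, Matrix.vecHead, Matrix.vecTail, Matrix.cons_val_two, Matrix.cons_val_three, Matrix.cons_val_four, Fin.ext_iff]

lemma hR2sq : R2 * R2 = 1 := by
  ext i j
  fin_cases i <;> fin_cases j <;>
    norm_num [R2, Matrix.mul_apply, Fin.sum_univ_five, Matrix.one_apply, Matrix.vecHead, Matrix.vecTail, Matrix.cons_val_two, Matrix.cons_val_three, Matrix.cons_val_four, Fin.ext_iff]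

lemma hA : R1 * R2 = Amat := by
  ext i j
  fin_cases i <;> fin_cases j <;>
    norm_num [R1, R2, Amat, Matrix.mul_apply, Fin.sum_univ_five, Matrix.vecHead, Matrix.vecTail, Matrix.cons_val_two, Matrix.cons_val_three, Matrix.cons_val_four]

lemma hAA : Amat * Amat = A2mat := by
  ext i j
  fin_cases i <;> fin_cases j <;>
    norm_num [Amat, A2mat, Matrix.mul_apply, Fin.sum_univ_five, Matrix.vecHead, Matrix.vecTail, Matrix.cons_val_two, Matrix.cons_val_three, Matrix.cons_val_four]

lemma hA3 : A2mat * Amat = A3mat := by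
  ext i j
  fin_cases i <;> fin_cases j <;>
    norm_num [Amat, A2mat, A3mat, Matrix.mul_apply, Fin.sum_univ_five, Matrix.vecHead, Matrix.vecTail, Matrix.cons_val_two, Matrix.cons_val_three, Matrix.cons_val_four]

lemma hA4 : A2mat * A2mat = 1 := by
  ext i j
  fin_cases i <;> fin_cases j <;>
    norm_num [A2mat, Matrix.mul_apply, Fin.sum_univ_five, Matrix.one_apply, Matrix.vecHead, Matrix.vecTail, Matrix.cons_val_two, Matrix.cons_val_three, Matrix.cons_val_four, Fin.ext_iff]

lemma hAR1 : Amat * R1 = R1 * A3mat := by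
  ext i j
  fin_cases i <;> fin_cases j <;>
    norm_num [Amat, R1, A3mat, Matrix.mul_apply, Fin.sum_univ_five, Matrix.vecHead, Matrix.vecTail, Matrix.cons_val_two, Matrix.cons_val_three, Matrix.cons_val_four]

lemma hApow2 : Amat ^ 2 = A2mat := by rw [pow_two, hAA]
lemma hApow3 : Amat ^ 3 = A3mat := by
  rw [pow_succ, hApow2, hA3]
lemma hApow4 : Amat ^ 4 = 1 := by
  rw [show (4:ℕ) = 2 + 2 from rfl, pow_add, hApow2, hA4]

lemma hAne1 : Amat ≠ 1 := by
  intro h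
  have := congrFun (congrFun h 0) 0
  norm_num [Amat, Matrix.one_apply] at this

lemma hA2ne1 : A2mat ≠ 1 := by
  intro h
  have := congrFun (congrFun h 0) 0
  norm_num [A2mat, Matrix.one_apply] at this

lemma hA3ne1 : A3mat ≠ 1 := by
  intro h
  have := congrFun (congrFun h 0) 0
  norm_num [A3mat, Matrix.one_apply] at this

lemma hR1ne1 : R1 ≠ 1 := by
  intro h
  have := congrFun (congrFun h 0) 0
  norm_num [R1, Matrix.one_apply] at this

lemma hR1neA : Amat ≠ R1 := by
  intro h
  have := congrFun (congrFun h 0) 1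
  simp [R1, Amat] at this

lemma hR1neA2 : A2mat ≠ R1 := by
  intro h
  have := congrFun (congrFun h 0) 1
  simp [R1, A2mat] at this

lemma hR1neA3 : A3mat ≠ R1 := by
  intro h
  have := congrFun (congrFun h 0) 1
  simp [R1, A3mat] at this

/-- exponents congruent mod 4 give the same power of `Amat`. -/
lemma hpow_mod (m n : ℕ) (h : m % 4 = n % 4) : Amat ^ m = Amat ^ n := by
  rw [pow_eq_pow_mod m hApow4, pow_eq_pow_mod n hApow4, h]

lemma hcomm : ∀ m : ℕ, Amat ^ m * R1 = R1 * Amat ^ (3 * m) := by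
  intro m
  induction m with
  | zero => simp
  | succ k ih =>
      have h3 : Amat ^ 3 = A3mat := hApow3
      calc Amat ^ (k + 1) * R1 = Amat ^ k * (Amat * R1) := by
            rw [pow_succ, mul_assoc]
        _ = Amat ^ k * R1 * A3mat := by rw [hAR1, mul_assoc]
        _ = R1 * Amat ^ (3 * k) * Amat ^ 3 := by rw [ih, h3]
        _ = R1 * Amat ^ (3 * (k + 1)) := by
            rw [mul_assoc, ← pow_add, Nat.mul_succ]

/-- The homomorphism from the dihedral group of order 8 to the matrix ring. -/
noncomputable def f : DihedralGroup 4 →* Matrix (Fin 5) (Fin 5) ℂ where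
  toFun x := match x with
    | .r i => Amat ^ i.val
    | .sr i => R1 * Amat ^ i.val
  map_one' := by
    show Amat ^ (0 : ZMod 4).val = 1
    simp [ZMod.val_zero]
  map_mul' := by
    have hsub : ∀ i j : ZMod 4, j - i = 3 * i + j := by decide
    have hval3 : ∀ i : ZMod 4, ((3 : ZMod 4) * i).val = 3 * i.val % 4 := by decide
    rintro (i | i) (j | j)
    · show Amat ^ (i + j).val = Amat ^ i.val * Amat ^ j.val
      rw [← pow_add]
      apply hpow_mod
      rw [ZMod.val_add]; omega
    · show R1 * Amat ^ (j - i).val = Amat ^ i.val * (R1 * Amat ^ j.val)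
      rw [← mul_assoc, hcomm, mul_assoc, ← pow_add]
      congr 1
      apply hpow_mod
      rw [hsub, ZMod.val_add, hval3]
      omega
    · show R1 * Amat ^ (i + j).val = R1 * Amat ^ i.val * Amat ^ j.val
      rw [mul_assoc, ← pow_add]
      congr 1
      apply hpow_mod
      rw [ZMod.val_add]; omega
    · show Amat ^ (j - i).val = R1 * Amat ^ i.val * (R1 * Amat ^ j.val)
      symm
      calc R1 * Amat ^ i.val * (R1 * Amat ^ j.val)
          = R1 * (Amat ^ i.val * R1) * Amat ^ j.val := by
            simp only [mul_assoc]
        _ = R1 * (R1 * Amat ^ (3 * i.val)) * Amat ^ j.val := by rw [hcomm]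
        _ = Amat ^ (3 * i.val + j.val) := by
            rw [← mul_assoc, hR1sq, one_mul, pow_add]
        _ = Amat ^ (j - i).val := by
            apply hpow_mod
            rw [hsub, ZMod.val_add, hval3]
            omega

lemma f_r (i : ZMod 4) : f (.r i) = Amat ^ i.val := rfl
lemma f_sr (i : ZMod 4) : f (.sr i) = R1 * Amat ^ i.val := rfl

lemma hker : ∀ x : DihedralGroup 4, f x = 1 → x = 1 := by
  rintro (i | i) h
  · fin_cases i
    · rfl
    · erw [f_r] at h
      replace h : Amat ^ 1 = 1 := h
      rw [pow_one] at h
      exact absurd h hAne1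
    · erw [f_r] at h
      replace h : Amat ^ 2 = 1 := h
      rw [hApow2] at h
      exact absurd h hA2ne1
    · erw [f_r] at h
      replace h : Amat ^ 3 = 1 := h
      rw [hApow3] at h
      exact absurd h hA3ne1
  · rw [f_sr] at h
    have h2 : Amat ^ i.val = R1 := by
      have := congrArg (fun M => R1 * M) h
      simp only [← mul_assoc, hR1sq, one_mul, mul_one] at this
      exact this
    exfalso
    fin_cases i
    · replace h2 : Amat ^ 0 = R1 := h2
      rw [pow_zero] at h2
      exact hR1ne1 h2.symm
    · replace h2 : Amat ^ 1 = R1 := h2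
      rw [pow_one] at h2
      exact hR1neA h2
    · replace h2 : Amat ^ 2 = R1 := h2
      rw [hApow2] at h2
      exact hR1neA2 h2
    · replace h2 : Amat ^ 3 = R1 := h2
      rw [hApow3] at h2
      exact hR1neA3 h2

lemma hinj : Function.Injective f := by
  intro x y h
  have hy : f y * f y⁻¹ = 1 := by
    rw [← _root_.map_mul, mul_inv_cancel, _root_.map_one]
  have h2 : f (x * y⁻¹) = 1 := by
    rw [_root_.map_mul, h, hy]
  have := hker _ h2
  rwa [mul_inv_eq_one] at this

lemma hrange : MonoidHom.mrange f = Submonoid.closure ({R1, R2} : Set (Matrix (Fin 5) (Fin 5) ℂ)) := by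
  apply le_antisymm
  · rintro _ ⟨x, rfl⟩
    have hR1m : R1 ∈ Submonoid.closure ({R1, R2} : Set (Matrix (Fin 5) (Fin 5) ℂ)) :=
      Submonoid.subset_closure (Or.inl rfl)
    have hR2m : R2 ∈ Submonoid.closure ({R1, R2} : Set (Matrix (Fin 5) (Fin 5) ℂ)) :=
      Submonoid.subset_closure (Or.inr rfl)
    have hAm : Amat ∈ Submonoid.closure ({R1, R2} : Set (Matrix (Fin 5) (Fin 5) ℂ)) := by
      rw [← hA]; exact mul_mem hR1m hR2m
    rcases x with i | i
    · exact pow_mem hAm _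
    · exact mul_mem hR1m (pow_mem hAm _)
  · rw [Submonoid.closure_le]
    rintro x (rfl | rfl)
    · exact ⟨.sr 0, by rw [f_sr]; simp [ZMod.val_zero]⟩
    · refine ⟨.sr 1, ?_⟩
      rw [f_sr, show ((1 : ZMod 4)).val = 1 from rfl, pow_one, ← hA, ← mul_assoc,
        hR1sq, one_mul]

/-- Since `R1` and `R2` have finite multiplicative order, the multiplicative
closure of `{R1, R2}` in the matrix ring coincides with the subgroup of
GL(5, ℂ) generated by `R1` and `R2`. -/
theorem stmt19 :
    R1 ^ 2 = 1 ∧ R2 ^ 2 = 1 ∧ (R1 * R2) ^ 4 = 1 ∧ (R1 * R2) ^ 2 ≠ 1 ∧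
    Nat.card (Submonoid.closure ({R1, R2} : Set (Matrix (Fin 5) (Fin 5) ℂ))) = 8 ∧
    Nonempty
      ((Submonoid.closure ({R1, R2} : Set (Matrix (Fin 5) (Fin 5) ℂ))) ≃*
        DihedralGroup 4) := by
  have e1 : DihedralGroup 4 ≃* MonoidHom.mrange f :=
    MulEquiv.ofBijective f.mrangeRestrict
      ⟨fun a b h => hinj (by simpa [Subtype.ext_iff] using h), f.mrangeRestrict_surjective⟩
  have e2 : MonoidHom.mrange f ≃* Submonoid.closure ({R1, R2} : Set (Matrix (Fin 5) (Fin 5) ℂ)) :=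
    MulEquiv.submonoidCongr hrange
  have e : DihedralGroup 4 ≃* Submonoid.closure ({R1, R2} : Set (Matrix (Fin 5) (Fin 5) ℂ)) :=
    e1.trans e2
  refine ⟨by rw [pow_two, hR1sq], by rw [pow_two, hR2sq], by rw [hA, hApow4],
    by rw [hA, hApow2]; exact hA2ne1, ?_, ⟨e.symm⟩⟩
  rw [Nat.card_congr e.symm.toEquiv, Nat.card_eq_fintype_card, DihedralGroup.card]
end
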